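/- Fix a natural number k ≥ 1 and a real number ε with 0 ≤ ε < 1. For n ≥ k define E[N_n] = ∑_{r=k}^{n} ∑_{e=0}^{∞} min(r+e, n) · C(r+e−1, e) ε^e (1−ε)^r · P_{M_n}(r) and E[N_n²] = ∑_{r=k}^{n} ∑_{e=0}^{∞} min((r+e)², n²) · C(r+e−1, e) ε^e (1−ε)^r · P_{M_n}(r), where P_{M_n}(r) = 2^{k−r} ∏_{l=0}^{n−r−1} (1 − 2^{l−(n−k)}). Then lim_{n→∞} ( E[N_n²] − E[N_n]² ) = ((k + c₀)ε + c₀ + c₁)/(1 − ε)², where c₀ = ∑_{i=1}^{∞} 1/(2^i − 1) and c₁ = ∑_{i=1}^{∞} 1/(2^i − 1)². -/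

import Mathlib

/-!
Write `r = k + m`. For fixed `m`, `PM k n (k + m)` tends to `p m := 2⁻ᵐ ∏_{j > m} (1 - 2⁻ʲ)` and is
at most `2⁻ᵐ`, while the truncated inner sums over `e` increase to the negative binomial moments
`r / (1 - ε)` and `(r² + ε r) / (1 - ε)²`. By dominated convergence both limits are therefore
moments of `k + M` with `M ∼ p`. The recurrence `(1 - 2^{-(m+1)}) p (m + 1) = p m / 2` makes the
generating function `g` of `p` satisfy `g (z / 2) = (1 - z / 2) g z`, so `φ = (log g)'` and
`ψ = (log g)''` at `z = 2^{-N}` obey `φ N = φ (N + 1) / 2 + 1 / (2 (1 - 2^{-(N+1)}))` and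
`ψ N = ψ (N + 1) / 4 + 1 / (4 (1 - 2^{-(N+1)})²)`. Unrolling gives `E M = φ 0 = c₀` and
`E[M (M - 1)] - (E M)² = ψ 0 = c₁`, and the limit of the variance is
`(E[(k + M)²] + ε E[k + M]) / (1 - ε)² - (E[k + M] / (1 - ε))²`.
-/

open Filter

/-- The Erdős–Borwein constant `c₀ = ∑_{i=1}^{∞} 1/(2^i − 1)`. -/
noncomputable def c₀ : ℝ := ∑' i : ℕ, 1 / ((2 : ℝ) ^ (i + 1) - 1)

/-- The digital search tree constant `c₁ = ∑_{i=1}^{∞} 1/(2^i − 1)²`. -/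
noncomputable def c₁ : ℝ := ∑' i : ℕ, 1 / ((2 : ℝ) ^ (i + 1) - 1) ^ 2

/-- `P_{M_n}(r) = 2^{k−r} ∏_{l=0}^{n−r−1} (1 − 2^{l−(n−k)})`. -/
noncomputable def PM (k n r : ℕ) : ℝ :=
  (2 : ℝ) ^ ((k : ℤ) - (r : ℤ)) *
    ∏ l ∈ Finset.range (n - r), (1 - (2 : ℝ) ^ ((l : ℤ) - ((n : ℤ) - (k : ℤ))))

/-- `E[N_n] = ∑_{r=k}^{n} ∑_{e=0}^{∞} min(r+e, n) · C(r+e−1, e) ε^e (1−ε)^r · P_{M_n}(r)`. -/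
noncomputable def EN (k : ℕ) (ε : ℝ) (n : ℕ) : ℝ :=
  ∑ r ∈ Finset.Icc k n, ∑' e : ℕ,
    (min (r + e) n : ℝ) * (Nat.choose (r + e - 1) e : ℝ) * ε ^ e * (1 - ε) ^ r * PM k n r

/-- `E[N_n²] = ∑_{r=k}^{n} ∑_{e=0}^{∞} min((r+e)², n²) · C(r+e−1, e) ε^e (1−ε)^r · P_{M_n}(r)`. -/
noncomputable def EN2 (k : ℕ) (ε : ℝ) (n : ℕ) : ℝ :=
  ∑ r ∈ Finset.Icc k n, ∑' e : ℕ,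
    (min ((r + e) ^ 2) (n ^ 2) : ℝ) * (Nat.choose (r + e - 1) e : ℝ) * ε ^ e *
      (1 - ε) ^ r * PM k n r

open Finset

namespace RoundLength

theorem one_sub_sum_le_prod_one_sub {ι : Type*} [LinearOrder ι] (s : Finset ι) {f : ι → ℝ}
    (h0 : ∀ i ∈ s, 0 ≤ f i) (h1 : ∀ i ∈ s, f i ≤ 1) :
    1 - ∑ i ∈ s, f i ≤ ∏ i ∈ s, (1 - f i) := by
  rw [prod_one_sub_ordered]
  gcongr with i hi
  have hle : ∏ j ∈ s with j < i, (1 - f j) ≤ 1 := by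
    refine prod_le_one (fun j hj => ?_) (fun j hj => ?_) <;>
      linarith [h0 j (mem_filter.1 hj).1, h1 j (mem_filter.1 hj).1]
  nlinarith [h0 i hi]

lemma half_pow_le_one (i : ℕ) : (1 / 2 : ℝ) ^ i ≤ 1 := pow_le_one₀ (by norm_num) (by norm_num)

section PowerSeries

variable {c : ℕ → ℝ} {z : ℝ}

lemma summable_mul_pow_of_nonneg (hc0 : ∀ m, 0 ≤ c m) (hc : Summable c) (hz0 : 0 ≤ z)
    (hz1 : z ≤ 1) : Summable fun m => c m * z ^ m :=
  hc.of_nonneg_of_le (fun m => mul_nonneg (hc0 m) (pow_nonneg hz0 m))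
    fun m => mul_le_of_le_one_right (hc0 m) (pow_le_one₀ hz0 hz1)

lemma tsum_mul_pow_le_tsum (hc0 : ∀ m, 0 ≤ c m) (hc : Summable c) (hz0 : 0 ≤ z) (hz1 : z ≤ 1) :
    ∑' m, c m * z ^ m ≤ ∑' m, c m :=
  (summable_mul_pow_of_nonneg hc0 hc hz0 hz1).tsum_le_tsum
    (fun m => mul_le_of_le_one_right (hc0 m) (pow_le_one₀ hz0 hz1)) hc

lemma le_tsum_mul_pow (hc0 : ∀ m, 0 ≤ c m) (hc : Summable c) (hz0 : 0 ≤ z) (hz1 : z ≤ 1) :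
    c 0 ≤ ∑' m, c m * z ^ m := by
  simpa using (summable_mul_pow_of_nonneg hc0 hc hz0 hz1).le_tsum 0
    fun m _ => mul_nonneg (hc0 m) (pow_nonneg hz0 m)

lemma hasSum_mul_pow_of_succ {a b d : ℕ → ℝ} {B D : ℝ} (hb : HasSum (fun m => b m * z ^ m) B)
    (hd : HasSum (fun m => d m * z ^ m) D) (h0 : a 0 = b 0)
    (hsucc : ∀ m, a (m + 1) = b (m + 1) + d m) : HasSum (fun m => a m * z ^ m) (B + z * D) := by
  have h : HasSum (fun m => a (m + 1) * z ^ (m + 1)) (B - b 0 + z * D) := by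
    have h := ((hasSum_nat_add_iff' (f := fun m => b m * z ^ m) 1).2 hb).add (hd.mul_left z)
    rw [sum_range_one, pow_zero, mul_one] at h
    refine h.congr_fun fun m => ?_
    rw [hsucc, pow_succ]; ring
  convert HasSum.zero_add (f := fun m => a m * z ^ m) h using 1
  rw [h0]; ring

end PowerSeries

theorem hasSum_pow_mul_of_eq_mul_succ_add {x b : ℕ → ℝ} {q C : ℝ} (hq0 : 0 ≤ q) (hq1 : q < 1)
    (hb : ∀ i, 0 ≤ b i) (hx : ∀ N, |x N| ≤ C) (h : ∀ N, x N = q * x (N + 1) + b N) :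
    HasSum (fun i => q ^ i * b i) (x 0) := by
  have unroll : ∀ N, ∑ i ∈ range N, q ^ i * b i = x 0 - q ^ N * x N := by
    intro N
    induction N with
    | zero => simp
    | succ N ih => rw [sum_range_succ, ih, h N]; ring
  have hrem : Tendsto (fun N => q ^ N * x N) atTop (nhds 0) := by
    refine squeeze_zero_norm (fun N => ?_)
      (by simpa using (tendsto_pow_atTop_nhds_zero_of_lt_one hq0 hq1).mul_const C)
    rw [norm_mul, norm_pow, Real.norm_of_nonneg hq0]
    exact mul_le_mul_of_nonneg_left (hx N) (pow_nonneg hq0 N)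
  rw [hasSum_iff_tendsto_nat_of_nonneg fun i => mul_nonneg (pow_nonneg hq0 i) (hb i)]
  simpa [unroll] using (tendsto_const_nhds (x := x 0)).sub hrem

section Truncation

variable {f w : ℕ → ℝ} {A : ℝ}

lemma tendsto_tsum_min_mul {c : ℕ → ℝ} (hf : ∀ e, 0 ≤ f e) (hw : ∀ e, 0 ≤ w e)
    (hA : HasSum (fun e => f e * w e) A) (hc : Tendsto c atTop atTop) :
    Tendsto (fun n => ∑' e, min (f e) (c n) * w e) atTop (nhds A) := by
  rw [← hA.tsum_eq]
  refine tendsto_tsum_of_dominated_convergence hA.summable (fun e => ?_) ?_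
  · refine tendsto_const_nhds.congr' ?_
    filter_upwards [hc.eventually_ge_atTop (f e)] with n hn
    rw [min_eq_left hn]
  · filter_upwards [hc.eventually_ge_atTop 0] with n hn e
    rw [Real.norm_of_nonneg (mul_nonneg (le_min (hf e) hn) (hw e))]
    exact mul_le_mul_of_nonneg_right (min_le_left _ _) (hw e)

lemma abs_tsum_min_mul_le {c : ℝ} (hf : ∀ e, 0 ≤ f e) (hw : ∀ e, 0 ≤ w e)
    (hA : HasSum (fun e => f e * w e) A) (hc : 0 ≤ c) : |∑' e, min (f e) c * w e| ≤ A := by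
  have hle : ∀ e, min (f e) c * w e ≤ f e * w e :=
    fun e => mul_le_mul_of_nonneg_right (min_le_left _ _) (hw e)
  have hnonneg : ∀ e, 0 ≤ min (f e) c * w e := fun e => mul_nonneg (le_min (hf e) hc) (hw e)
  rw [abs_of_nonneg (tsum_nonneg hnonneg), ← hA.tsum_eq]
  exact (hA.summable.of_nonneg_of_le hnonneg hle).tsum_le_tsum hle hA.summable

end Truncation

lemma summable_quadratic_mul_half_pow (a b c : ℝ) :
    Summable fun m : ℕ => (a + b * m + c * m ^ 2) * (1 / 2 : ℝ) ^ m := by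
  have hs (j : ℕ) := summable_pow_mul_geometric_of_norm_lt_one j (by norm_num : ‖(1 / 2 : ℝ)‖ < 1)
  exact (((hs 0).mul_left a).add (((hs 1).mul_left b).add ((hs 2).mul_left c))).congr
    fun m => by ring

lemma sum_Icc_eq_tsum (k n : ℕ) (F : ℕ → ℝ) :
    ∑ r ∈ Icc k n, F r = ∑' m, if k + m ≤ n then F (k + m) else 0 := by
  rw [← Ico_add_one_right_eq_Icc, sum_Ico_eq_sum_range,
    tsum_eq_sum (s := range (n + 1 - k)) fun m hm => if_neg (by rw [mem_range] at hm; omega)]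
  exact sum_congr rfl fun m hm => (if_pos (by rw [mem_range] at hm; omega)).symm

lemma hasSum_choose_mul_pow (r : ℕ) {x : ℝ} (hx : |x| < 1) :
    HasSum (fun e => ((r + e - 1).choose e : ℝ) * x ^ e) (1 / (1 - x) ^ r) := by
  cases r with
  | zero =>
    convert hasSum_single (f := fun e => ((0 + e - 1).choose e : ℝ) * x ^ e) 0 fun e he => ?_
    · simp
    · simp [Nat.choose_eq_zero_of_lt (Nat.sub_lt (Nat.pos_of_ne_zero he) one_pos)]
  | succ s =>
    refine (hasSum_choose_mul_geometric_of_norm_lt_one s (by rwa [Real.norm_eq_abs])).congr_fun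
      fun e => ?_
    rw [show s + 1 + e - 1 = e + s by omega, Nat.choose_symm_add]

lemma add_mul_choose (r e : ℕ) : (r + e) * (r + e - 1).choose e = r * (r + e).choose e := by
  cases r with
  | zero => cases e <;> simp
  | succ s =>
    have h := Nat.choose_mul_succ_eq (s + e) e
    rw [show s + e + 1 - e = s + 1 by omega] at h
    rw [show s + 1 + e - 1 = s + e by omega, show s + 1 + e = s + e + 1 by omega]
    linarith

noncomputable def tailProd (m : ℕ) : ℝ := ∏' j : ℕ, (1 - (1 / 2 : ℝ) ^ (m + 1 + j))

lemma multipliable_tailProd (m : ℕ) :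
    Multipliable fun j : ℕ => 1 - (1 / 2 : ℝ) ^ (m + 1 + j) := by
  simp_rw [sub_eq_add_neg]
  refine multipliable_one_add_of_summable ?_
  simpa [pow_add] using summable_geometric_two.mul_left ((1 / 2 : ℝ) ^ (m + 1))

lemma tendsto_prod_range_tailProd (m : ℕ) :
    Tendsto (fun t => ∏ j ∈ range t, (1 - (1 / 2 : ℝ) ^ (m + 1 + j))) atTop
      (nhds (tailProd m)) :=
  (multipliable_tailProd m).hasProd.tendsto_prod_nat

lemma one_sub_half_pow_le_prod_range (m t : ℕ) :
    1 - (1 / 2 : ℝ) ^ m ≤ ∏ j ∈ range t, (1 - (1 / 2 : ℝ) ^ (m + 1 + j)) := by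
  refine le_trans ?_ (one_sub_sum_le_prod_one_sub _ (fun j _ => by positivity)
    fun j _ => half_pow_le_one _)
  have := sum_geometric_two_le t
  simp_rw [pow_add _ (m + 1), ← mul_sum, pow_succ]
  nlinarith [pow_pos (by norm_num : (0:ℝ) < 1 / 2) m]

lemma prod_range_le_one (m t : ℕ) :
    ∏ j ∈ range t, (1 - (1 / 2 : ℝ) ^ (m + 1 + j)) ≤ 1 :=
  prod_le_one (fun j _ => by linarith [half_pow_le_one (m + 1 + j)])
    fun j _ => by linarith [pow_pos (by norm_num : (0:ℝ) < 1 / 2) (m + 1 + j)]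

lemma one_sub_half_pow_le_tailProd (m : ℕ) : 1 - (1 / 2 : ℝ) ^ m ≤ tailProd m :=
  ge_of_tendsto' (tendsto_prod_range_tailProd m) (one_sub_half_pow_le_prod_range m)

lemma tailProd_le_one (m : ℕ) : tailProd m ≤ 1 :=
  le_of_tendsto' (tendsto_prod_range_tailProd m) (prod_range_le_one m)

lemma tailProd_eq_mul_succ (m : ℕ) :
    tailProd m = (1 - (1 / 2 : ℝ) ^ (m + 1)) * tailProd (m + 1) := by
  have hshift : (fun j : ℕ => 1 - (1 / 2 : ℝ) ^ (m + 1 + (j + 1))) =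
      fun j => 1 - (1 / 2 : ℝ) ^ (m + 1 + 1 + j) := by
    ext j; ring_nf
  have h := tprod_eq_zero_mul' (f := fun j : ℕ => 1 - (1 / 2 : ℝ) ^ (m + 1 + j))
    (by simpa only [hshift] using multipliable_tailProd (m + 1))
  simpa only [hshift, add_zero, tailProd] using h

lemma tendsto_tailProd : Tendsto tailProd atTop (nhds 1) := by
  refine tendsto_of_tendsto_of_tendsto_of_le_of_le ?_ tendsto_const_nhds
    one_sub_half_pow_le_tailProd tailProd_le_one
  simpa using (tendsto_pow_atTop_nhds_zero_of_lt_one (by norm_num : (0:ℝ) ≤ 1 / 2)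
    (by norm_num)).const_sub 1

/-- The law `p` of the rank overhead `r - k` in the limit `n → ∞`. -/
noncomputable def overheadProb (m : ℕ) : ℝ := (1 / 2 : ℝ) ^ m * tailProd m

lemma overheadProb_nonneg (m : ℕ) : 0 ≤ overheadProb m :=
  mul_nonneg (by positivity) (by linarith [one_sub_half_pow_le_tailProd m, half_pow_le_one m])

lemma overheadProb_le (m : ℕ) : overheadProb m ≤ (1 / 2 : ℝ) ^ m :=
  mul_le_of_le_one_right (by positivity) (tailProd_le_one m)

lemma overheadProb_zero_pos : 0 < overheadProb 0 := by
  have := one_sub_half_pow_le_tailProd 1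
  rw [overheadProb, tailProd_eq_mul_succ]
  norm_num at this ⊢
  linarith

lemma overheadProb_succ_sub (m : ℕ) :
    overheadProb (m + 1) - overheadProb m / 2 = (1 / 2 : ℝ) ^ (m + 1) * overheadProb (m + 1) := by
  rw [overheadProb, overheadProb, tailProd_eq_mul_succ m]
  ring

lemma sum_range_succ_overheadProb (M : ℕ) : ∑ m ∈ range (M + 1), overheadProb m = tailProd M := by
  induction M with
  | zero => simp [overheadProb]
  | succ M ih => rw [sum_range_succ, ih, tailProd_eq_mul_succ M, overheadProb]; ring

lemma hasSum_overheadProb : HasSum overheadProb 1 := by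
  rw [hasSum_iff_tendsto_nat_of_nonneg overheadProb_nonneg, ← tendsto_add_atTop_iff_nat 1]
  simpa only [sum_range_succ_overheadProb] using tendsto_tailProd

lemma summable_pow_mul_overheadProb (j : ℕ) : Summable fun m : ℕ => (m : ℝ) ^ j * overheadProb m :=
  (summable_pow_mul_geometric_of_norm_lt_one j (by norm_num : ‖(1 / 2 : ℝ)‖ < 1)).of_nonneg_of_le
    (fun m => mul_nonneg (by positivity) (overheadProb_nonneg m))
    fun m => mul_le_mul_of_nonneg_left (overheadProb_le m) (by positivity)

section GeneratingFunction

variable {z : ℝ}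

noncomputable def pgf (z : ℝ) : ℝ := ∑' m : ℕ, overheadProb m * z ^ m

noncomputable def pgf' (z : ℝ) : ℝ := ∑' m : ℕ, ((m : ℝ) + 1) * overheadProb (m + 1) * z ^ m

noncomputable def pgf'' (z : ℝ) : ℝ :=
  ∑' m : ℕ, ((m : ℝ) + 2) * ((m : ℝ) + 1) * overheadProb (m + 2) * z ^ m

lemma summable_succ_mul_overheadProb_succ :
    Summable fun m : ℕ => ((m : ℝ) + 1) * overheadProb (m + 1) :=
  ((summable_nat_add_iff 1).2 (summable_pow_mul_overheadProb 1)).congr fun m => by push_cast; ring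

lemma summable_succ_mul_succ_mul_overheadProb_add_two :
    Summable fun m : ℕ => ((m : ℝ) + 2) * ((m : ℝ) + 1) * overheadProb (m + 2) :=
  ((summable_nat_add_iff 2).2 ((summable_pow_mul_overheadProb 2).sub
    (summable_pow_mul_overheadProb 1))).congr fun m => by push_cast; ring

lemma hasSum_pgf (hz0 : 0 ≤ z) (hz1 : z ≤ 1) :
    HasSum (fun m => overheadProb m * z ^ m) (pgf z) :=
  (summable_mul_pow_of_nonneg overheadProb_nonneg hasSum_overheadProb.summable hz0 hz1).hasSum

lemma hasSum_pgf' (hz0 : 0 ≤ z) (hz1 : z ≤ 1) :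
    HasSum (fun m : ℕ => ((m : ℝ) + 1) * overheadProb (m + 1) * z ^ m) (pgf' z) :=
  (summable_mul_pow_of_nonneg (fun m => mul_nonneg (by positivity) (overheadProb_nonneg _))
    summable_succ_mul_overheadProb_succ hz0 hz1).hasSum

lemma hasSum_pgf'' (hz0 : 0 ≤ z) (hz1 : z ≤ 1) :
    HasSum (fun m : ℕ => ((m : ℝ) + 2) * ((m : ℝ) + 1) * overheadProb (m + 2) * z ^ m) (pgf'' z) :=
  (summable_mul_pow_of_nonneg (fun m => mul_nonneg (by positivity) (overheadProb_nonneg _))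
    summable_succ_mul_succ_mul_overheadProb_add_two hz0 hz1).hasSum

lemma pgf_half (hz0 : 0 ≤ z) (hz1 : z ≤ 1) : pgf (z / 2) = (1 - z / 2) * pgf z := by
  have h := hasSum_mul_pow_of_succ (a := fun m : ℕ => overheadProb m * (1 / 2) ^ m)
    (d := fun m : ℕ => -(1 / 2) * overheadProb m) (hasSum_pgf hz0 hz1)
    (by simpa only [mul_assoc] using (hasSum_pgf hz0 hz1).mul_left (-(1 / 2)))
    (by simp) fun m => by linarith [overheadProb_succ_sub m]
  calc pgf (z / 2) = ∑' m, overheadProb m * (1 / 2) ^ m * z ^ m := tsum_congr fun m => by ring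
    _ = (1 - z / 2) * pgf z := by rw [h.tsum_eq]; ring

lemma pgf'_half (hz0 : 0 ≤ z) (hz1 : z ≤ 1) :
    pgf' (z / 2) = 2 * (1 - z / 2) * pgf' z - pgf z := by
  have h := hasSum_mul_pow_of_succ
    (a := fun m : ℕ => ((m : ℝ) + 1) * overheadProb (m + 1) * (1 / 2) ^ (m + 1))
    (b := fun m : ℕ => ((m : ℝ) + 1) * overheadProb (m + 1) - overheadProb m / 2)
    (d := fun m : ℕ => -(1 / 2) * (((m : ℝ) + 1) * overheadProb (m + 1)))
    (((hasSum_pgf' hz0 hz1).sub ((hasSum_pgf hz0 hz1).div_const 2)).congr_fun fun m => by ring)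
    (by simpa only [mul_assoc] using (hasSum_pgf' hz0 hz1).mul_left (-(1 / 2)))
    (by linarith [overheadProb_succ_sub 0])
    fun m => by push_cast; linear_combination -((m : ℝ) + 2) * overheadProb_succ_sub (m + 1)
  have hhalf : pgf' (z / 2) / 2 = ∑' m : ℕ, ((m : ℝ) + 1) * overheadProb (m + 1) *
      (1 / 2) ^ (m + 1) * z ^ m := by
    rw [pgf', ← tsum_div_const]; exact tsum_congr fun m => by ring
  linear_combination 2 * hhalf + 2 * h.tsum_eq

lemma pgf''_half (hz0 : 0 ≤ z) (hz1 : z ≤ 1) :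
    pgf'' (z / 2) = 4 * ((1 - z / 2) * pgf'' z - pgf' z) := by
  have h := hasSum_mul_pow_of_succ
    (a := fun m : ℕ => ((m : ℝ) + 2) * ((m : ℝ) + 1) * overheadProb (m + 2) * (1 / 2) ^ (m + 2))
    (b := fun m : ℕ => ((m : ℝ) + 2) * ((m : ℝ) + 1) * overheadProb (m + 2) -
      ((m : ℝ) + 1) * overheadProb (m + 1))
    (d := fun m : ℕ => -(1 / 2) * (((m : ℝ) + 2) * ((m : ℝ) + 1) * overheadProb (m + 2)))
    (((hasSum_pgf'' hz0 hz1).sub (hasSum_pgf' hz0 hz1)).congr_fun fun m => by ring)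
    (by simpa only [mul_assoc] using (hasSum_pgf'' hz0 hz1).mul_left (-(1 / 2)))
    (by norm_num; linarith [overheadProb_succ_sub 1])
    fun m => by
      push_cast
      linear_combination -((m : ℝ) + 3) * ((m : ℝ) + 2) * overheadProb_succ_sub (m + 2)
  have hquarter : pgf'' (z / 2) / 4 = ∑' m : ℕ, ((m : ℝ) + 2) * ((m : ℝ) + 1) *
      overheadProb (m + 2) * (1 / 2) ^ (m + 2) * z ^ m := by
    rw [pgf'', ← tsum_div_const]; exact tsum_congr fun m => by ring
  linear_combination 4 * hquarter + 4 * h.tsum_eq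

lemma pgf_one : pgf 1 = 1 := by simpa [pgf] using hasSum_overheadProb.tsum_eq

lemma overheadProb_zero_le_pgf (hz0 : 0 ≤ z) (hz1 : z ≤ 1) : overheadProb 0 ≤ pgf z :=
  le_tsum_mul_pow overheadProb_nonneg hasSum_overheadProb.summable hz0 hz1

lemma pgf_half_pow_pos (N : ℕ) : 0 < pgf ((1 / 2) ^ N) :=
  overheadProb_zero_pos.trans_le (overheadProb_zero_le_pgf (by positivity) (half_pow_le_one N))

lemma pgf'_nonneg (hz0 : 0 ≤ z) : 0 ≤ pgf' z :=
  tsum_nonneg fun m => mul_nonneg (mul_nonneg (by positivity) (overheadProb_nonneg _))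
    (pow_nonneg hz0 m)

lemma pgf''_nonneg (hz0 : 0 ≤ z) : 0 ≤ pgf'' z :=
  tsum_nonneg fun m => mul_nonneg (mul_nonneg (by positivity) (overheadProb_nonneg _))
    (pow_nonneg hz0 m)

lemma pgf'_le_pgf'_one (hz0 : 0 ≤ z) (hz1 : z ≤ 1) : pgf' z ≤ pgf' 1 := by
  simpa [pgf'] using tsum_mul_pow_le_tsum (fun m => mul_nonneg (by positivity)
    (overheadProb_nonneg _)) summable_succ_mul_overheadProb_succ hz0 hz1

lemma pgf''_le_pgf''_one (hz0 : 0 ≤ z) (hz1 : z ≤ 1) : pgf'' z ≤ pgf'' 1 := by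
  simpa [pgf''] using tsum_mul_pow_le_tsum (fun m => mul_nonneg (by positivity)
    (overheadProb_nonneg _)) summable_succ_mul_succ_mul_overheadProb_add_two hz0 hz1

noncomputable def dlogPgf (N : ℕ) : ℝ := pgf' ((1 / 2) ^ N) / pgf ((1 / 2) ^ N)

noncomputable def d2logPgf (N : ℕ) : ℝ :=
  pgf'' ((1 / 2) ^ N) / pgf ((1 / 2) ^ N) - dlogPgf N ^ 2

lemma half_pow_succ_eq (N : ℕ) : (1 / 2 : ℝ) ^ (N + 1) = (1 / 2) ^ N / 2 := by ring

lemma dlogPgf_eq (N : ℕ) :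
    dlogPgf N = 1 / 2 * dlogPgf (N + 1) + 1 / 2 / (1 - (1 / 2) ^ (N + 1)) := by
  have hz0 : (0 : ℝ) ≤ (1 / 2) ^ N := by positivity
  have hg := (pgf_half_pow_pos N).ne'
  have hu : (2 : ℝ) - (1 / 2) ^ N ≠ 0 := by linarith [half_pow_le_one N]
  rw [dlogPgf, dlogPgf, half_pow_succ_eq, pgf'_half hz0 (half_pow_le_one N),
    pgf_half hz0 (half_pow_le_one N)]
  field_simp
  ring

lemma d2logPgf_eq (N : ℕ) :
    d2logPgf N = 1 / 4 * d2logPgf (N + 1) + 1 / 4 / (1 - (1 / 2) ^ (N + 1)) ^ 2 := by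
  have hz0 : (0 : ℝ) ≤ (1 / 2) ^ N := by positivity
  have hg := (pgf_half_pow_pos N).ne'
  have hu : (2 : ℝ) - (1 / 2) ^ N ≠ 0 := by linarith [half_pow_le_one N]
  rw [d2logPgf, d2logPgf, dlogPgf, dlogPgf, half_pow_succ_eq, pgf''_half hz0 (half_pow_le_one N),
    pgf'_half hz0 (half_pow_le_one N), pgf_half hz0 (half_pow_le_one N)]
  field_simp
  ring

lemma abs_dlogPgf_le (N : ℕ) : |dlogPgf N| ≤ pgf' 1 / overheadProb 0 := by
  have hz0 : (0 : ℝ) ≤ (1 / 2) ^ N := by positivity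
  have hg := overheadProb_zero_le_pgf hz0 (half_pow_le_one N)
  rw [dlogPgf, abs_of_nonneg (div_nonneg (pgf'_nonneg hz0) (overheadProb_nonneg 0 |>.trans hg))]
  exact div_le_div₀ (pgf'_nonneg zero_le_one) (pgf'_le_pgf'_one hz0 (half_pow_le_one N))
    overheadProb_zero_pos hg

lemma abs_d2logPgf_le (N : ℕ) :
    |d2logPgf N| ≤ pgf'' 1 / overheadProb 0 + (pgf' 1 / overheadProb 0) ^ 2 := by
  have hz0 : (0 : ℝ) ≤ (1 / 2) ^ N := by positivity
  have hg := overheadProb_zero_le_pgf hz0 (half_pow_le_one N)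
  have h0 : 0 ≤ pgf'' ((1 / 2) ^ N) / pgf ((1 / 2) ^ N) :=
    div_nonneg (pgf''_nonneg hz0) (overheadProb_nonneg 0 |>.trans hg)
  have h1 : pgf'' ((1 / 2) ^ N) / pgf ((1 / 2) ^ N) ≤ pgf'' 1 / overheadProb 0 :=
    div_le_div₀ (pgf''_nonneg zero_le_one) (pgf''_le_pgf''_one hz0 (half_pow_le_one N))
      overheadProb_zero_pos hg
  have h2 : dlogPgf N ^ 2 ≤ (pgf' 1 / overheadProb 0) ^ 2 := by
    simpa only [sq_abs] using pow_le_pow_left₀ (abs_nonneg _) (abs_dlogPgf_le N) 2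
  rw [d2logPgf, abs_le]
  constructor <;> nlinarith [sq_nonneg (dlogPgf N)]

lemma half_pow_mul_eq_inv (i : ℕ) :
    (1 / 2 : ℝ) ^ i * (1 / 2 / (1 - (1 / 2) ^ (i + 1))) = 1 / (2 ^ (i + 1) - 1) := by
  have h : (1 : ℝ) < 2 ^ (i + 1) := one_lt_pow₀ (by norm_num) (by omega)
  simp only [div_pow, one_pow, pow_succ] at h ⊢
  field_simp

lemma quarter_pow_mul_eq_inv_sq (i : ℕ) :
    (1 / 4 : ℝ) ^ i * (1 / 4 / (1 - (1 / 2) ^ (i + 1)) ^ 2) = 1 / (2 ^ (i + 1) - 1) ^ 2 := by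
  have h4 : (1 / 4 : ℝ) ^ i = ((1 / 2) ^ i) ^ 2 := by rw [← pow_mul, mul_comm, pow_mul]; norm_num
  rw [h4, show (1 / 4 : ℝ) / (1 - (1 / 2) ^ (i + 1)) ^ 2 = (1 / 2 / (1 - (1 / 2) ^ (i + 1))) ^ 2 by
    rw [div_pow (1 / 2 : ℝ)]; norm_num, ← mul_pow, half_pow_mul_eq_inv, div_pow, one_pow]

lemma c₀_eq_pgf'_one : c₀ = pgf' 1 := by
  have h := hasSum_pow_mul_of_eq_mul_succ_add (by norm_num) (by norm_num)
    (fun i => div_nonneg (by norm_num) (by linarith [half_pow_le_one (i + 1)]))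
    abs_dlogPgf_le dlogPgf_eq
  rw [c₀, (h.congr_fun fun i => (half_pow_mul_eq_inv i).symm).tsum_eq, dlogPgf, pow_zero,
    pgf_one, div_one]

lemma c₁_eq_pgf''_one : c₁ = pgf'' 1 - c₀ ^ 2 := by
  have h := hasSum_pow_mul_of_eq_mul_succ_add (by norm_num) (by norm_num)
    (fun i => div_nonneg (by norm_num) (sq_nonneg _)) abs_d2logPgf_le d2logPgf_eq
  rw [c₁, (h.congr_fun fun i => (quarter_pow_mul_eq_inv_sq i).symm).tsum_eq, d2logPgf, dlogPgf,
    pow_zero, pgf_one, div_one, div_one, c₀_eq_pgf'_one]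

lemma hasSum_mul_overheadProb : HasSum (fun m : ℕ => (m : ℝ) * overheadProb m) c₀ := by
  rw [c₀_eq_pgf'_one]
  convert HasSum.zero_add (f := fun m : ℕ => (m : ℝ) * overheadProb m)
    (by simpa using hasSum_pgf' zero_le_one le_rfl) using 1
  simp

lemma hasSum_sq_mul_overheadProb :
    HasSum (fun m : ℕ => (m : ℝ) ^ 2 * overheadProb m) (c₀ ^ 2 + c₁ + c₀) := by
  have h2 : HasSum (fun m : ℕ => (m : ℝ) * (m - 1) * overheadProb m) (pgf'' 1) := by
    refine (hasSum_nat_add_iff' 2).1 ?_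
    rw [show ∑ i ∈ range 2, (i : ℝ) * (i - 1) * overheadProb i = 0 by simp [sum_range_succ],
      sub_zero]
    exact (hasSum_pgf'' zero_le_one le_rfl).congr_fun fun m => by push_cast; ring
  convert h2.add hasSum_mul_overheadProb using 1
  · ext m; ring
  · rw [c₁_eq_pgf''_one]; ring

end GeneratingFunction

section NegativeBinomial

/-- For `r = 0` the truncated subtraction makes this the point mass at `e = 0`. -/
noncomputable def negBinomial (ε : ℝ) (r e : ℕ) : ℝ :=
  ((r + e - 1).choose e : ℝ) * ε ^ e * (1 - ε) ^ r

variable {ε : ℝ}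

lemma negBinomial_nonneg (h₀ : 0 ≤ ε) (h₁ : ε ≤ 1) (r e : ℕ) : 0 ≤ negBinomial ε r e := by
  unfold negBinomial
  have : 0 ≤ 1 - ε := by linarith
  positivity

lemma hasSum_add_mul_negBinomial (hε : |ε| < 1) (r : ℕ) :
    HasSum (fun e : ℕ => ((r : ℝ) + e) * negBinomial ε r e) (r / (1 - ε)) := by
  have hε1 : 1 - ε ≠ 0 := by linarith [le_abs_self ε]
  rw [show (r : ℝ) / (1 - ε) = r * (1 - ε) ^ r * (1 / (1 - ε) ^ (r + 1)) by
    rw [pow_succ]; field_simp]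
  refine ((hasSum_choose_mul_pow (r + 1) hε).mul_left _).congr_fun fun e => ?_
  have h : ((r : ℝ) + e) * ((r + e - 1).choose e : ℕ) = r * ((r + 1 + e - 1).choose e : ℕ) := by
    rw [show r + 1 + e - 1 = r + e by omega]; exact_mod_cast add_mul_choose r e
  rw [negBinomial]
  linear_combination ε ^ e * (1 - ε) ^ r * h

lemma hasSum_add_sq_mul_negBinomial (hε : |ε| < 1) (r : ℕ) :
    HasSum (fun e : ℕ => ((r : ℝ) + e) ^ 2 * negBinomial ε r e) ((r ^ 2 + ε * r) / (1 - ε) ^ 2) := by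
  have hε1 : 1 - ε ≠ 0 := by linarith [le_abs_self ε]
  rw [show ((r : ℝ) ^ 2 + ε * r) / (1 - ε) ^ 2 = r * (r + 1) * (1 - ε) ^ r * (1 / (1 - ε) ^ (r + 2))
      - r * (1 - ε) ^ r * (1 / (1 - ε) ^ (r + 1)) by rw [pow_succ, pow_add]; field_simp; ring]
  refine (((hasSum_choose_mul_pow (r + 2) hε).mul_left _).sub
    ((hasSum_choose_mul_pow (r + 1) hε).mul_left _)).congr_fun fun e => ?_
  have h1 : ((r : ℝ) + e) * ((r + e - 1).choose e : ℕ) = r * ((r + 1 + e - 1).choose e : ℕ) := by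
    rw [show r + 1 + e - 1 = r + e by omega]; exact_mod_cast add_mul_choose r e
  have h2 : ((r : ℝ) + 1 + e) * ((r + 1 + e - 1).choose e : ℕ) =
      (r + 1) * ((r + 2 + e - 1).choose e : ℕ) := by
    rw [show r + 2 + e - 1 = r + 1 + e by omega]; exact_mod_cast add_mul_choose (r + 1) e
  rw [negBinomial]
  linear_combination ε ^ e * (1 - ε) ^ r * (((r : ℝ) + e) * h1 + r * h2)

end NegativeBinomial

lemma PM_add_eq (k n m : ℕ) (h : k + m ≤ n) :
    PM k n (k + m) = (1 / 2) ^ m * ∏ j ∈ range (n - k - m), (1 - (1 / 2 : ℝ) ^ (m + 1 + j)) := by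
  have hzpow (a : ℕ) : (2 : ℝ) ^ (-(a : ℤ)) = (1 / 2) ^ a := by
    rw [zpow_neg, zpow_natCast, one_div, inv_pow]
  rw [PM, show (k : ℤ) - ((k + m : ℕ) : ℤ) = -(m : ℤ) by push_cast; ring, hzpow,
    show n - (k + m) = n - k - m by omega, ← prod_range_reflect]
  refine congrArg _ (prod_congr rfl fun j hj => ?_)
  rw [mem_range] at hj
  rw [show ((n - k - m - 1 - j : ℕ) : ℤ) - ((n : ℤ) - k) = -((m + 1 + j : ℕ) : ℤ) by omega, hzpow]

lemma PM_add_nonneg (k n m : ℕ) (h : k + m ≤ n) : 0 ≤ PM k n (k + m) := by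
  have := one_sub_half_pow_le_prod_range m (n - k - m)
  rw [PM_add_eq k n m h]
  exact mul_nonneg (by positivity) (by linarith [half_pow_le_one m])

lemma PM_add_le (k n m : ℕ) (h : k + m ≤ n) : PM k n (k + m) ≤ (1 / 2) ^ m := by
  rw [PM_add_eq k n m h]
  exact mul_le_of_le_one_right (by positivity) (prod_range_le_one m _)

lemma tendsto_PM_add (k m : ℕ) : Tendsto (fun n => PM k n (k + m)) atTop (nhds (overheadProb m)) := by
  have h := ((tendsto_prod_range_tailProd m).comp (tendsto_sub_atTop_nat (k + m))).const_mul
    ((1 / 2 : ℝ) ^ m)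
  refine h.congr' ?_
  filter_upwards [eventually_ge_atTop (k + m)] with n hn
  simp [PM_add_eq k n m hn, Nat.sub_sub]

theorem tendsto_sum_Icc_mul_PM {k : ℕ} {F : ℕ → ℕ → ℝ} {L G : ℕ → ℝ}
    (hF : ∀ m, Tendsto (fun n => F n (k + m)) atTop (nhds (L m)))
    (hG : ∀ n m, |F n (k + m)| ≤ G m) (hGs : Summable fun m => G m * (1 / 2) ^ m) :
    Tendsto (fun n => ∑ r ∈ Icc k n, F n r * PM k n r) atTop
      (nhds (∑' m, L m * overheadProb m)) := by
  simp_rw [sum_Icc_eq_tsum]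
  refine tendsto_tsum_of_dominated_convergence hGs (fun m => ?_) (Eventually.of_forall fun n m => ?_)
  · refine ((hF m).mul (tendsto_PM_add k m)).congr' ?_
    filter_upwards [eventually_ge_atTop (k + m)] with n hn
    rw [if_pos hn]
  · split_ifs with h
    · rw [norm_mul, Real.norm_eq_abs, Real.norm_of_nonneg (PM_add_nonneg k n m h)]
      exact mul_le_mul (hG n m) (PM_add_le k n m h) (PM_add_nonneg k n m h)
        ((abs_nonneg _).trans (hG n m))
    · simpa using mul_nonneg ((abs_nonneg _).trans (hG n m)) (by positivity : (0 : ℝ) ≤ (1 / 2) ^ m)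

section Limits

variable {ε : ℝ}

lemma EN_eq (k n : ℕ) :
    EN k ε n = ∑ r ∈ Icc k n, (∑' e : ℕ, min ((r : ℝ) + e) n * negBinomial ε r e) * PM k n r := by
  refine sum_congr rfl fun r _ => ?_
  rw [← tsum_mul_right]
  exact tsum_congr fun e => by rw [negBinomial]; ring

lemma EN2_eq (k n : ℕ) :
    EN2 k ε n =
      ∑ r ∈ Icc k n, (∑' e : ℕ, min (((r : ℝ) + e) ^ 2) ((n : ℝ) ^ 2) * negBinomial ε r e) *
        PM k n r := by
  refine sum_congr rfl fun r _ => ?_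
  rw [← tsum_mul_right]
  exact tsum_congr fun e => by rw [negBinomial]; ring

theorem tendsto_EN (k : ℕ) (h₀ : 0 ≤ ε) (h₁ : ε < 1) :
    Tendsto (EN k ε) atTop (nhds ((k + c₀) / (1 - ε))) := by
  have hε : |ε| < 1 := abs_lt.2 ⟨by linarith, h₁⟩
  have hsum (r : ℕ) := hasSum_add_mul_negBinomial hε r
  have hlim := tendsto_sum_Icc_mul_PM (k := k)
    (F := fun n r => ∑' e : ℕ, min ((r : ℝ) + e) n * negBinomial ε r e)
    (G := fun m => ((k + m : ℕ) : ℝ) / (1 - ε))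
    (fun m => tendsto_tsum_min_mul (fun e => by positivity) (negBinomial_nonneg h₀ h₁.le _)
      (hsum (k + m)) tendsto_natCast_atTop_atTop)
    (fun n m => abs_tsum_min_mul_le (fun e => by positivity) (negBinomial_nonneg h₀ h₁.le _)
      (hsum (k + m)) (Nat.cast_nonneg n))
    ((summable_quadratic_mul_half_pow (k / (1 - ε)) (1 / (1 - ε)) 0).congr fun m => by
      push_cast; ring)
  have hval : HasSum (fun m => ((k + m : ℕ) : ℝ) / (1 - ε) * overheadProb m)
      ((k + c₀) / (1 - ε)) := by
    have h := ((hasSum_overheadProb.mul_left (k : ℝ)).add hasSum_mul_overheadProb).div_const (1 - ε)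
    rw [mul_one] at h
    exact h.congr_fun fun m => by push_cast; ring
  rw [hval.tsum_eq] at hlim
  exact hlim.congr fun n => (EN_eq k n).symm

theorem tendsto_EN2 (k : ℕ) (h₀ : 0 ≤ ε) (h₁ : ε < 1) :
    Tendsto (EN2 k ε) atTop (nhds (((k + c₀) ^ 2 + c₀ + c₁ + ε * (k + c₀)) / (1 - ε) ^ 2)) := by
  have hε : |ε| < 1 := abs_lt.2 ⟨by linarith, h₁⟩
  have hsum (r : ℕ) := hasSum_add_sq_mul_negBinomial hε r
  have hlim := tendsto_sum_Icc_mul_PM (k := k)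
    (F := fun n r => ∑' e : ℕ, min (((r : ℝ) + e) ^ 2) ((n : ℝ) ^ 2) * negBinomial ε r e)
    (G := fun m => (((k + m : ℕ) : ℝ) ^ 2 + ε * (k + m : ℕ)) / (1 - ε) ^ 2)
    (fun m => tendsto_tsum_min_mul (fun e => by positivity) (negBinomial_nonneg h₀ h₁.le _)
      (hsum (k + m)) ((tendsto_pow_atTop two_ne_zero).comp tendsto_natCast_atTop_atTop))
    (fun n m => abs_tsum_min_mul_le (fun e => by positivity) (negBinomial_nonneg h₀ h₁.le _)
      (hsum (k + m)) (by positivity))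
    ((summable_quadratic_mul_half_pow ((k ^ 2 + ε * k) / (1 - ε) ^ 2) ((2 * k + ε) / (1 - ε) ^ 2)
      (1 / (1 - ε) ^ 2)).congr fun m => by push_cast; ring)
  have hval : HasSum (fun m => (((k + m : ℕ) : ℝ) ^ 2 + ε * (k + m : ℕ)) / (1 - ε) ^ 2 *
      overheadProb m) (((k + c₀) ^ 2 + c₀ + c₁ + ε * (k + c₀)) / (1 - ε) ^ 2) := by
    have h := ((hasSum_overheadProb.mul_left ((k : ℝ) ^ 2 + ε * k)).add
      ((hasSum_mul_overheadProb.mul_left (2 * k + ε)).add hasSum_sq_mul_overheadProb)).div_const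
      ((1 - ε) ^ 2)
    rw [show ((k : ℝ) + c₀) ^ 2 + c₀ + c₁ + ε * (k + c₀) =
      (k ^ 2 + ε * k) * 1 + ((2 * k + ε) * c₀ + (c₀ ^ 2 + c₁ + c₀)) by ring]
    exact h.congr_fun fun m => by push_cast; ring
  rw [hval.tsum_eq] at hlim
  exact hlim.congr fun n => (EN2_eq k n).symm

end Limits

end RoundLength

theorem variance_round_length_limit_general (k : ℕ) (ε : ℝ)
    (h₀ : 0 ≤ ε) (h₁ : ε < 1) :
    Tendsto (fun n : ℕ => EN2 k ε n - (EN k ε n) ^ 2)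
      atTop (nhds ((((k : ℝ) + c₀) * ε + c₀ + c₁) / (1 - ε) ^ 2)) := by
  have h1ε : 1 - ε ≠ 0 := (sub_pos.2 h₁).ne'
  convert (RoundLength.tendsto_EN2 k h₀ h₁).sub ((RoundLength.tendsto_EN k h₀ h₁).pow 2) using 2
  field_simp
  ring

/-- `lim_{n→∞} Var[N_n] = lim_{n→∞} (E[N_n²] − E[N_n]²)
  = ((k + c₀)ε + c₀ + c₁)/(1 − ε)²`. -/
theorem variance_round_length_limit (k : ℕ) (hk : 1 ≤ k) (ε : ℝ)
    (h₀ : 0 ≤ ε) (h₁ : ε < 1) :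
    Tendsto (fun n : ℕ => EN2 k ε n - (EN k ε n) ^ 2)
      atTop (nhds ((((k : ℝ) + c₀) * ε + c₀ + c₁) / (1 - ε) ^ 2)) :=
  variance_round_length_limit_general k ε h₀ h₁
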